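/- Let 1 ≤ d ≤ 4 and let a : ℤ^d → ℂ satisfy ‖a‖_{h¹} < ∞. Then for every natural number N, the sum S_N := ∑_{(p,q,r,s) ∈ Γ₀, |p|² = N} conj(a_p) · a_q · conj(a_r) · a_s converges absolutely and is a real number, i.e. Im(S_N) = 0. -/

import Mathlib

/-- The lattice `ℤ^d`. -/
abbrev Zd (d : ℕ) := Fin d → ℤ

/-- Squared Euclidean norm `|p|² = p₁² + ⋯ + p_d²` of a lattice point, as a real number. -/
noncomputable def znormSq {d : ℕ} (p : Zd d) : ℝ := ∑ i, ((p i : ℝ)) ^ 2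

/-- Euclidean norm `|p|` of a lattice point. -/
noncomputable def znorm {d : ℕ} (p : Zd d) : ℝ := Real.sqrt (znormSq p)

/-- `(p,q,r,s)` belongs to the resonant set `Γ₀`: zero momentum `p - q + r - s = 0` and
`(|p| = |q| and |r| = |s|)` or `(|p| = |s| and |q| = |r|)`. -/
def res {d : ℕ} (p q r s : Zd d) : Prop :=
  p - q + r - s = 0 ∧
    ((znorm p = znorm q ∧ znorm r = znorm s) ∨ (znorm p = znorm s ∧ znorm q = znorm r))

/-- The set of triples `(q,r,s)` such that `(p,q,r,s) ∈ Γ₀`. -/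
abbrev ResTriples (d : ℕ) (p : Zd d) : Type :=
  {x : Zd d × Zd d × Zd d // res p x.1 x.2.1 x.2.2}

/-- The resonant trilinear operator `R[a¹,a²,a³]_p = ∑_{(p,q,r,s) ∈ Γ₀} a¹_q conj(a²_r) a³_s`. -/
noncomputable def Rop {d : ℕ} (a1 a2 a3 : Zd d → ℂ) (p : Zd d) : ℂ :=
  ∑' x : ResTriples d p, a1 x.1.1 * (starRingEnd ℂ) (a2 x.1.2.1) * a3 x.1.2.2

/-- The set of resonant quadruples `Γ₀`. -/
abbrev ResQuads (d : ℕ) : Type :=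
  {x : Zd d × Zd d × Zd d × Zd d // res x.1 x.2.1 x.2.2.1 x.2.2.2}

/-!
A resonant quadruple `(p,q,r,s)` with `|p|² = N` has `q` (first alternative) or `s` (second
alternative) on the same finite sphere `|·|² = N`, and zero momentum then determines it by one
further free point `v`. Hence the absolute summand is at most `C ‖a_v‖ ‖a_{v+c}‖` with finitely many
shifts `c`, which is summable for `a ∈ ℓ²`.

Reality: the map sending `(p,q,r,s)` to `(q,p,s,r)` under the first alternative and to
`(s,r,q,p)` otherwise is an involution of the index set which conjugates the summand.
-/

open Function ComplexConjugate

theorem Complex.im_tsum_eq_zero_of_perm {α : Type*} {f : α → ℂ} (e : Equiv.Perm α)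
    (h : ∀ x, f (e x) = conj (f x)) : (∑' x, f x).im = 0 := by
  rw [← Complex.conj_eq_iff_im, Complex.conj_tsum, ← e.tsum_eq]
  simp only [h, Complex.conj_conj]

section ShiftedProducts

variable {G E : Type*} [SeminormedAddCommGroup E]

theorem summable_norm_mul_norm_add_left [AddGroup G] {a : G → E}
    (ha : Summable fun p => ‖a p‖ ^ 2) (c : G) :
    Summable fun r => ‖a r‖ * ‖a (c + r)‖ := by
  refine Summable.of_nonneg_of_le (fun r => by positivity) (fun r => ?_)
    ((ha.add (ha.comp_injective (add_right_injective c))).div_const 2)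
  dsimp only [Pi.add_apply, comp_apply]
  linarith [two_mul_le_add_sq ‖a r‖ ‖a (c + r)‖]

variable [AddCommGroup G]

/-- The triple `((p, q), v)` stands for the zero-momentum quadruple `(p, q, v, p - q + v)`. -/
noncomputable def shiftWeight (a : G → E) (b : G → ℝ) (y : (G × G) × G) : ℝ :=
  b y.1.1 * b y.1.2 * (‖a y.2‖ * ‖a (y.1.1 - y.1.2 + y.2)‖)

theorem shiftWeight_nonneg (a : G → E) {b : G → ℝ} (hb0 : 0 ≤ b) : 0 ≤ shiftWeight a b :=
  fun _ => mul_nonneg (mul_nonneg (hb0 _) (hb0 _)) (by positivity)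

theorem summable_shiftWeight {a : G → E} (ha : Summable fun p => ‖a p‖ ^ 2) {b : G → ℝ}
    (hb0 : 0 ≤ b) (hb : (support b).Finite) : Summable (shiftWeight a b) := by
  refine (summable_prod_of_nonneg (shiftWeight_nonneg a hb0)).2
    ⟨fun x => (summable_norm_mul_norm_add_left ha (x.1 - x.2)).mul_left (b x.1 * b x.2), ?_⟩
  refine summable_of_hasFiniteSupport ((hb.prod hb).subset ?_)
  refine support_subset_iff'.2 fun x hx => ?_
  rcases not_and_or.1 hx with hx | hx <;>
    simp [shiftWeight, notMem_support.1 hx]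

theorem injOn_headTriple :
    Set.InjOn (fun x : G × G × G × G => ((x.1, x.2.1), x.2.2.1))
      {x | x.1 - x.2.1 + x.2.2.1 - x.2.2.2 = 0} := by
  rintro ⟨p, q, r, s⟩ hx ⟨p', q', r', s'⟩ hx' he
  simp only [Set.mem_ofPred_eq, Prod.mk.injEq] at hx hx' he
  obtain ⟨⟨rfl, rfl⟩, rfl⟩ := he
  rw [← sub_eq_zero.1 hx, ← sub_eq_zero.1 hx']

theorem injOn_tailTriple :
    Set.InjOn (fun x : G × G × G × G => ((x.2.2.2, x.1), x.2.1))
      {x | x.1 - x.2.1 + x.2.2.1 - x.2.2.2 = 0} := by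
  rintro ⟨p, q, r, s⟩ hx ⟨p', q', r', s'⟩ hx' he
  simp only [Set.mem_ofPred_eq, Prod.mk.injEq] at hx hx' he
  obtain ⟨⟨rfl, rfl⟩, rfl⟩ := he
  have hr : r = s - p + q := by rw [← sub_eq_zero, ← hx]; abel
  have hr' : r' = s - p + q := by rw [← sub_eq_zero, ← hx']; abel
  rw [hr, hr']

end ShiftedProducts

noncomputable def quadTerm {α : Type*} (a : α → ℂ) (x : α × α × α × α) : ℂ :=
  conj (a x.1) * a x.2.1 * conj (a x.2.2.1) * a x.2.2.2

section Resonant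

variable {d : ℕ}

lemma znormSq_nonneg (p : Zd d) : 0 ≤ znormSq p :=
  Finset.sum_nonneg fun _ _ => sq_nonneg _

lemma znormSq_eq_of_znorm_eq {p q : Zd d} (h : znorm p = znorm q) : znormSq p = znormSq q :=
  (Real.sqrt_inj (znormSq_nonneg p) (znormSq_nonneg q)).mp h

theorem finite_setOf_znormSq_eq (d N : ℕ) : {p : Zd d | znormSq p = N}.Finite := by
  refine (Set.Finite.pi fun _ => Set.finite_Icc (-(N : ℤ)) N).subset fun p hp i _ => ?_
  have hsq : (p i : ℝ) ^ 2 ≤ N :=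
    hp ▸ Finset.single_le_sum (fun j _ => sq_nonneg ((p j : ℤ) : ℝ)) (Finset.mem_univ i)
  have habs : |p i| ≤ N := by
    rw [Int.abs_eq_natAbs]
    exact (Int.natAbs_le_self_sq (p i)).trans (by exact_mod_cast hsq)
  exact abs_le.1 habs

open Classical in
noncomputable def resPartner (x : Zd d × Zd d × Zd d × Zd d) : Zd d × Zd d × Zd d × Zd d :=
  if znorm x.1 = znorm x.2.1 ∧ znorm x.2.2.1 = znorm x.2.2.2 then (x.2.1, x.1, x.2.2.2, x.2.2.1)
  else (x.2.2.2, x.2.2.1, x.2.1, x.1)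

theorem resPartner_involutive : Involutive (resPartner (d := d)) := by
  rintro ⟨p, q, r, s⟩
  by_cases h : znorm p = znorm q ∧ znorm r = znorm s
  · rw [show resPartner (p, q, r, s) = (q, p, s, r) from if_pos h]
    exact if_pos ⟨h.1.symm, h.2.symm⟩
  · rw [show resPartner (p, q, r, s) = (s, r, q, p) from if_neg h]
    exact if_neg fun h' => h ⟨h'.2.symm, h'.1.symm⟩

theorem res_swap_iff {p q r s : Zd d} : res q p s r ↔ res p q r s := by
  unfold res
  grind

theorem res_reverse_iff {p q r s : Zd d} : res s r q p ↔ res p q r s := by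
  unfold res
  grind

theorem res_resPartner_iff (x : Zd d × Zd d × Zd d × Zd d) :
    res x.1 x.2.1 x.2.2.1 x.2.2.2 ↔
      res (resPartner x).1 (resPartner x).2.1 (resPartner x).2.2.1 (resPartner x).2.2.2 := by
  unfold resPartner
  split_ifs
  exacts [res_swap_iff.symm, res_reverse_iff.symm]

theorem znormSq_resPartner_fst {x : Zd d × Zd d × Zd d × Zd d}
    (hx : res x.1 x.2.1 x.2.2.1 x.2.2.2) : znormSq (resPartner x).1 = znormSq x.1 := by
  unfold resPartner
  split_ifs with h
  · exact (znormSq_eq_of_znorm_eq h.1).symm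
  · exact (znormSq_eq_of_znorm_eq (hx.2.resolve_left h).1).symm

theorem quadTerm_resPartner (a : Zd d → ℂ) (x : Zd d × Zd d × Zd d × Zd d) :
    quadTerm a (resPartner x) = conj (quadTerm a x) := by
  unfold resPartner
  split_ifs <;> simp only [quadTerm, map_mul, Complex.conj_conj] <;> ring

noncomputable def resPartnerPerm (d N : ℕ) :
    Equiv.Perm {x : ResQuads d // znormSq x.1.1 = (N : ℝ)} :=
  ((resPartner_involutive.toPerm _).subtypeEquiv fun x => by
    rw [Involutive.coe_toPerm]; exact res_resPartner_iff x).subtypeEquiv fun x => by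
    simp [znormSq_resPartner_fst x.2]

theorem norm_quadTerm_le_shiftWeight (a : Zd d → ℂ) {N : ℕ} {b : Zd d → ℝ} (hb0 : 0 ≤ b)
    (hb : ∀ p, znormSq p = N → b p = ‖a p‖) {x : Zd d × Zd d × Zd d × Zd d}
    (hx : res x.1 x.2.1 x.2.2.1 x.2.2.2) (hN : znormSq x.1 = N) :
    ‖quadTerm a x‖ ≤ shiftWeight a b ((x.1, x.2.1), x.2.2.1) +
      shiftWeight a b ((x.2.2.2, x.1), x.2.1) := by
  obtain ⟨p, q, r, s⟩ := x
  obtain ⟨hmom, hpq | hps⟩ := hx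
  · have hW : shiftWeight a b ((p, q), r) = ‖quadTerm a (p, q, r, s)‖ := by
      rw [shiftWeight, hb p hN, hb q ((znormSq_eq_of_znorm_eq hpq.1).symm.trans hN),
        sub_eq_zero.1 hmom]
      simp only [quadTerm, norm_mul, Complex.norm_conj]
      ring
    exact hW ▸ le_add_of_nonneg_right (shiftWeight_nonneg a hb0 _)
  · have hW : shiftWeight a b ((s, p), q) = ‖quadTerm a (p, q, r, s)‖ := by
      rw [shiftWeight, hb p hN, hb s ((znormSq_eq_of_znorm_eq hps.1).symm.trans hN),
        show s - p + q = r by linear_combination -hmom]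
      simp only [quadTerm, norm_mul, Complex.norm_conj]
      ring
    exact hW ▸ le_add_of_nonneg_left (shiftWeight_nonneg a hb0 _)

end Resonant

theorem stmt11_general (d : ℕ) (a : Zd d → ℂ)
    (ha : Summable (fun p : Zd d => (1 + znormSq p) * ‖a p‖ ^ 2)) (N : ℕ) :
    Summable (fun x : {x : ResQuads d // znormSq x.1.1 = (N : ℝ)} =>
      ‖(starRingEnd ℂ) (a x.1.1.1) * a x.1.1.2.1 *
        (starRingEnd ℂ) (a x.1.1.2.2.1) * a x.1.1.2.2.2‖) ∧
    (∑' x : {x : ResQuads d // znormSq x.1.1 = (N : ℝ)},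
      (starRingEnd ℂ) (a x.1.1.1) * a x.1.1.2.1 *
        (starRingEnd ℂ) (a x.1.1.2.2.1) * a x.1.1.2.2.2).im = 0 := by
  have hl2 : Summable fun p => ‖a p‖ ^ 2 :=
    ha.of_nonneg_of_le (fun _ => by positivity) fun p =>
      le_mul_of_one_le_left (by positivity) (by linarith [znormSq_nonneg p])
  set K := {p : Zd d | znormSq p = N}
  set b := K.indicator (‖a ·‖)
  have hb0 : 0 ≤ b := Set.indicator_nonneg fun _ _ => norm_nonneg _
  have hW : Summable (shiftWeight a b) :=
    summable_shiftWeight hl2 hb0 ((finite_setOf_znormSq_eq d N).subset Set.support_indicator_subset)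
  have hbound (x : {x : ResQuads d // znormSq x.1.1 = (N : ℝ)}) :=
    norm_quadTerm_le_shiftWeight a hb0 (fun _ hp => Set.indicator_of_mem (s := K) hp _) x.1.2 x.2
  have hhead : Injective fun x : {x : ResQuads d // znormSq x.1.1 = (N : ℝ)} =>
      ((x.1.1.1, x.1.1.2.1), x.1.1.2.2.1) := fun x y h =>
    Subtype.ext (Subtype.ext (injOn_headTriple x.1.2.1 y.1.2.1 h))
  have htail : Injective fun x : {x : ResQuads d // znormSq x.1.1 = (N : ℝ)} =>
      ((x.1.1.2.2.2, x.1.1.1), x.1.1.2.1) := fun x y h =>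
    Subtype.ext (Subtype.ext (injOn_tailTriple x.1.2.1 y.1.2.1 h))
  exact ⟨Summable.of_nonneg_of_le (fun _ => norm_nonneg _) hbound
      ((hW.comp_injective hhead).add (hW.comp_injective htail)),
    Complex.im_tsum_eq_zero_of_perm (resPartnerPerm d N) fun x => quadTerm_resPartner a x.1.1⟩

/-- The reality property used in the proof of Lemma 3.3: for `a ∈ h¹` and `N ∈ ℕ`, the sum
`S_N = ∑_{(p,q,r,s) ∈ Γ₀, |p|² = N} conj(a_p) a_q conj(a_r) a_s` converges absolutely and
is a real number. -/
theorem stmt11 (d : ℕ) (hd1 : 1 ≤ d) (hd4 : d ≤ 4) (a : Zd d → ℂ)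
    (ha : Summable (fun p : Zd d => (1 + znormSq p) * ‖a p‖ ^ 2)) (N : ℕ) :
    Summable (fun x : {x : ResQuads d // znormSq x.1.1 = (N : ℝ)} =>
      ‖(starRingEnd ℂ) (a x.1.1.1) * a x.1.1.2.1 *
        (starRingEnd ℂ) (a x.1.1.2.2.1) * a x.1.1.2.2.2‖) ∧
    (∑' x : {x : ResQuads d // znormSq x.1.1 = (N : ℝ)},
      (starRingEnd ℂ) (a x.1.1.1) * a x.1.1.2.1 *
        (starRingEnd ℂ) (a x.1.1.2.2.1) * a x.1.1.2.2.2).im = 0 :=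
  stmt11_general d a ha N
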